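/- The discounted value function h_α(x) := Σ_{t=0}^∞ α^t 𝔼[ c(F_t(x, ·)) ] is well defined (the series converges absolutely), h_α is differentiable on ℝ^d, and its gradient admits the representation ∇h_α(x) = Σ_{t=0}^∞ α^t 𝔼[ S_t(x, ·)ᵀ ∇c(F_t(x, ·)) ], with the uniform bound ‖∇h_α(x)‖ ≤ C / (1 − αL) for all x. -/

import Mathlib

open MeasureTheory

/-- The random flow driven by noise `N`: `rflow a N 0 x ω = x`,
`rflow a N (s+1) x ω = a (rflow a N s x ω) (N (s+1) ω)`. -/
def rflow {E M Ω : Type*} (a : E → M → E) (N : ℕ → Ω → M) : ℕ → E → Ω → E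
  | 0 => fun x _ => x
  | s + 1 => fun x ω => a (rflow a N s x ω) (N (s + 1) ω)

/-!
By the chain rule the derivative of `x ↦ c (F_t x ω)` is `Dc (F_t x ω) ∘ S_t x ω`, and
`‖S_t‖ ≤ L ^ t`, so it is bounded by `C L ^ t` uniformly in `x` and `ω`. Dominated convergence then
differentiates each expectation under the integral sign, and the summable bound `C (α L) ^ t`
differentiates the series term by term. The gradient is the image of this derivative under the Riesz
isometry `(toDual ℝ E).symm`, which commutes with the series and the integrals and sends
`Dc (F_t) ∘ S_t` to `S_tᵀ ∇c (F_t)`.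
-/

open InnerProductSpace

section Series

variable {E F : Type*} [NormedAddCommGroup E] [NormedSpace ℝ E]
  [NormedAddCommGroup F] [NormedSpace ℝ F]

theorem summable_abs_pow_mul_of_abs_le {α B : ℝ} (hα₀ : 0 ≤ α) (hα₁ : α < 1) {v : ℕ → ℝ}
    (hv : ∀ t, |v t| ≤ B) : Summable fun t => |α ^ t * v t| := by
  refine .of_nonneg_of_le (fun t => abs_nonneg _) (fun t => ?_)
    ((summable_geometric_of_lt_one hα₀ hα₁).mul_right B)
  rw [abs_mul, abs_of_nonneg (pow_nonneg hα₀ t)]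
  exact mul_le_mul_of_nonneg_left (hv t) (pow_nonneg hα₀ t)

theorem norm_pow_smul_le_of_norm_le {α K C : ℝ} (hα : 0 ≤ α) {v : F} {t : ℕ}
    (hv : ‖v‖ ≤ C * K ^ t) : ‖α ^ t • v‖ ≤ C * (α * K) ^ t := by
  rw [norm_smul, Real.norm_of_nonneg (pow_nonneg hα t), mul_pow, mul_left_comm]
  exact mul_le_mul_of_nonneg_left hv (pow_nonneg hα t)

theorem hasFDerivAt_tsum_pow_mul {α K C : ℝ} (hα : 0 ≤ α) (hαK₀ : 0 ≤ α * K) (hαK : α * K < 1)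
    {V : ℕ → E → ℝ} {V' : ℕ → E → StrongDual ℝ E} (hV : ∀ t x, HasFDerivAt (V t) (V' t x) x)
    (hV' : ∀ t x, ‖V' t x‖ ≤ C * K ^ t) {x₀ : E} (hV₀ : Summable fun t => α ^ t * V t x₀)
    (x : E) :
    HasFDerivAt (fun y => ∑' t, α ^ t * V t y) (∑' t, α ^ t • V' t x) x :=
  hasFDerivAt_tsum ((summable_geometric_of_lt_one hαK₀ hαK).mul_left C)
    (fun t y => (hV t y).const_mul _) (fun t y => norm_pow_smul_le_of_norm_le hα (hV' t y)) hV₀ x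

theorem norm_tsum_pow_smul_le {α K C : ℝ} (hα : 0 ≤ α) (hαK₀ : 0 ≤ α * K) (hαK : α * K < 1)
    {v : ℕ → F} (hv : ∀ t, ‖v t‖ ≤ C * K ^ t) : ‖∑' t, α ^ t • v t‖ ≤ C / (1 - α * K) :=
  tsum_of_norm_bounded ((hasSum_geometric_of_lt_one hαK₀ hαK).mul_left C)
    fun t => norm_pow_smul_le_of_norm_le hα (hv t)

end Series

section Gradient

variable {E F : Type*} [NormedAddCommGroup E] [InnerProductSpace ℝ E] [CompleteSpace E]
  [NormedAddCommGroup F] [InnerProductSpace ℝ F] [CompleteSpace F]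

theorem gradient_comp {g : E → F} {c : F → ℝ} {x : E} (hc : DifferentiableAt ℝ c (g x))
    (hg : DifferentiableAt ℝ g x) :
    gradient (fun y => c (g y)) x = (fderiv ℝ g x).adjoint (gradient c (g x)) := by
  refine (toDual ℝ E).injective (ContinuousLinearMap.ext fun u => ?_)
  rw [gradient, LinearIsometryEquiv.apply_symm_apply, toDual_apply_apply,
    ContinuousLinearMap.adjoint_inner_left, ← toDual_apply_apply, gradient,
    LinearIsometryEquiv.apply_symm_apply, fderiv_fun_comp x hc hg]
  rfl

theorem toDual_symm_tsum_smul_integral {Ω : Type*} [MeasurableSpace Ω] {μ : Measure Ω}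
    (r : ℕ → ℝ) {Φ : ℕ → Ω → StrongDual ℝ E} (hΦ : ∀ t, Integrable (Φ t) μ) :
    (toDual ℝ E).symm (∑' t, r t • ∫ ω, Φ t ω ∂μ) =
      ∑' t, r t • ∫ ω, (toDual ℝ E).symm (Φ t ω) ∂μ := by
  let e := (toDual ℝ E).symm.toContinuousLinearEquiv
  refine (e.map_tsum (L := .unconditional ℕ)).trans (tsum_congr fun t => ?_)
  rw [map_smulₛₗ, ← ContinuousLinearEquiv.coe_coe,
    ← ContinuousLinearMap.integral_comp_commSL (by simp) _ (hΦ t)]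
  simp [e]

end Gradient

theorem hasFDerivAt_integral_of_norm_fderiv_le {E G Ω : Type*} [NormedAddCommGroup E]
    [NormedSpace ℝ E] [NormedAddCommGroup G] [NormedSpace ℝ G] [MeasurableSpace Ω]
    {μ : Measure Ω} [IsFiniteMeasure μ] {F : E → Ω → G} {K : ℝ} {x : E}
    (hF_meas : ∀ y, AEStronglyMeasurable (F y) μ) (hF_int : Integrable (F x) μ)
    (hF'_meas : AEStronglyMeasurable (fun ω => fderiv ℝ (F · ω) x) μ)
    (hF_diff : ∀ ω, Differentiable ℝ (F · ω)) (hK : ∀ y ω, ‖fderiv ℝ (F · ω) y‖ ≤ K) :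
    HasFDerivAt (fun y => ∫ ω, F y ω ∂μ) (∫ ω, fderiv ℝ (F · ω) x ∂μ) x :=
  hasFDerivAt_integral_of_dominated_of_fderiv_le (bound := fun _ => K) Filter.univ_mem
    (.of_forall hF_meas) hF_int hF'_meas (.of_forall fun ω y _ => hK y ω)
    (integrable_const K) (.of_forall fun ω y _ => (hF_diff ω y).hasFDerivAt)

namespace rflow

variable {E M Ω : Type*} {a : E → M → E} {N : ℕ → Ω → M}

theorem measurable_uncurry [MeasurableSpace E] [MeasurableSpace M] [MeasurableSpace Ω]
    (ha : Measurable fun p : E × M => a p.1 p.2) (hN : ∀ s, Measurable (N s)) (t : ℕ) :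
    Measurable fun p : E × Ω => rflow a N t p.1 p.2 := by
  induction t with
  | zero => exact measurable_fst
  | succ s ih => exact ha.comp (ih.prodMk ((hN (s + 1)).comp measurable_snd))

variable [NormedAddCommGroup E] [NormedSpace ℝ E]

theorem differentiable (ha : ∀ n, Differentiable ℝ (a · n)) (t : ℕ) (ω : Ω) :
    Differentiable ℝ (rflow a N t · ω) := by
  induction t with
  | zero => exact differentiable_id
  | succ s ih => exact (ha _).comp ih

theorem fderiv_zero (x : E) (ω : Ω) :
    fderiv ℝ (rflow a N 0 · ω) x = ContinuousLinearMap.id ℝ E :=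
  fderiv_fun_id

theorem fderiv_succ (ha : ∀ n, Differentiable ℝ (a · n)) (t : ℕ) (x : E) (ω : Ω) :
    fderiv ℝ (rflow a N (t + 1) · ω) x =
      (fderiv ℝ (a · (N (t + 1) ω)) (rflow a N t x ω)).comp (fderiv ℝ (rflow a N t · ω) x) :=
  fderiv_comp x (ha _ _) (differentiable ha t ω x)

theorem norm_fderiv_le (ha : ∀ n, Differentiable ℝ (a · n)) {L : ℝ}
    (hL : ∀ x n, ‖fderiv ℝ (a · n) x‖ ≤ L) (t : ℕ) (x : E) (ω : Ω) :
    ‖fderiv ℝ (rflow a N t · ω) x‖ ≤ L ^ t := by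
  induction t with
  | zero => simpa [fderiv_zero] using ContinuousLinearMap.norm_id_le
  | succ s ih =>
    have hL₀ : 0 ≤ L := (norm_nonneg _).trans (hL x (N (s + 1) ω))
    rw [fderiv_succ ha, pow_succ']
    exact (ContinuousLinearMap.opNorm_comp_le _ _).trans
      (mul_le_mul (hL _ _) ih (norm_nonneg _) hL₀)

theorem norm_fderiv_comp_le (ha : ∀ n, Differentiable ℝ (a · n)) {L : ℝ}
    (hL : ∀ x n, ‖fderiv ℝ (a · n) x‖ ≤ L) {c : E → ℝ} (hc : Differentiable ℝ c) {C : ℝ}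
    (hC : ∀ y, ‖fderiv ℝ c y‖ ≤ C) (t : ℕ) (x : E) (ω : Ω) :
    ‖fderiv ℝ (fun y => c (rflow a N t y ω)) x‖ ≤ C * L ^ t := by
  rw [fderiv_fun_comp x (hc _) (differentiable ha t ω x)]
  exact (ContinuousLinearMap.opNorm_comp_le _ _).trans
    (mul_le_mul (hC _) (norm_fderiv_le ha hL t x ω) (norm_nonneg _) ((norm_nonneg _).trans (hC x)))

variable [MeasurableSpace E] [FiniteDimensional ℝ E] [MeasurableSpace M] [MeasurableSpace Ω]

theorem measurable_fderiv (ha_meas : Measurable fun p : E × M => a p.1 p.2)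
    (hN : ∀ s, Measurable (N s)) (ha : ∀ n, Differentiable ℝ (a · n))
    (hDa_meas : Measurable fun p : E × M => fderiv ℝ (a · p.2) p.1) (t : ℕ) (x : E) :
    Measurable fun ω => fderiv ℝ (rflow a N t · ω) x := by
  induction t with
  | zero => simp only [fderiv_zero, measurable_const]
  | succ s ih =>
    simp_rw [fderiv_succ ha]
    have hDa : Measurable fun ω => fderiv ℝ (a · (N (s + 1) ω)) (rflow a N s x ω) :=
      hDa_meas.comp (((measurable_uncurry ha_meas hN s).comp measurable_prodMk_left).prodMk (hN _))
    exact isBoundedBilinearMap_comp.continuous.measurable.comp (hDa.prodMk ih)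

theorem measurable_fderiv_comp [BorelSpace E] (ha_meas : Measurable fun p : E × M => a p.1 p.2)
    (hN : ∀ s, Measurable (N s)) (ha : ∀ n, Differentiable ℝ (a · n))
    (hDa_meas : Measurable fun p : E × M => fderiv ℝ (a · p.2) p.1) {c : E → ℝ}
    (hc : ContDiff ℝ 1 c) (t : ℕ) (x : E) :
    Measurable fun ω => fderiv ℝ (fun y => c (rflow a N t y ω)) x := by
  simp_rw [fderiv_fun_comp x (hc.differentiable one_ne_zero _) (differentiable ha t _ x)]
  exact isBoundedBilinearMap_comp.continuous.measurable.comp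
    (((hc.continuous_fderiv one_ne_zero).measurable.comp
      ((measurable_uncurry ha_meas hN t).comp measurable_prodMk_left)).prodMk
      (measurable_fderiv ha_meas hN ha hDa_meas t x))

theorem hasFDerivAt_integral_comp [BorelSpace E] {μ : Measure Ω} [IsFiniteMeasure μ]
    (ha_meas : Measurable fun p : E × M => a p.1 p.2) (hN : ∀ s, Measurable (N s))
    (ha : ∀ n, Differentiable ℝ (a · n))
    (hDa_meas : Measurable fun p : E × M => fderiv ℝ (a · p.2) p.1) {L : ℝ}
    (hL : ∀ x n, ‖fderiv ℝ (a · n) x‖ ≤ L) {c : E → ℝ} (hc : ContDiff ℝ 1 c) {B : ℝ}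
    (hcB : ∀ y, |c y| ≤ B) {C : ℝ} (hC : ∀ y, ‖fderiv ℝ c y‖ ≤ C) (t : ℕ) (x : E) :
    HasFDerivAt (fun x => ∫ ω, c (rflow a N t x ω) ∂μ)
      (∫ ω, fderiv ℝ (fun y => c (rflow a N t y ω)) x ∂μ) x := by
  have hc_diff := hc.differentiable one_ne_zero
  have hF_meas (y : E) : Measurable fun ω => c (rflow a N t y ω) :=
    hc.continuous.measurable.comp ((measurable_uncurry ha_meas hN t).comp measurable_prodMk_left)
  exact hasFDerivAt_integral_of_norm_fderiv_le (fun y => (hF_meas y).aestronglyMeasurable)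
    (.of_bound (hF_meas x).aestronglyMeasurable B (.of_forall fun ω => hcB _))
    (measurable_fderiv_comp ha_meas hN ha hDa_meas hc t x).aestronglyMeasurable
    (fun ω => hc_diff.comp (differentiable ha t ω)) (norm_fderiv_comp_le ha hL hc_diff hC t)

end rflow

/-- The discounted value function `h_α(x) = ∑_t α^t 𝔼[c(F_t(x,·))]` is
well defined (absolutely convergent series), differentiable, with
`∇h_α(x) = ∑_t α^t 𝔼[S_t(x,·)ᵀ ∇c(F_t(x,·))]` and `‖∇h_α(x)‖ ≤ C/(1 − αL)`. -/
theorem gradient_of_discounted_value_representation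
    {Ω : Type*} [MeasurableSpace Ω] (ℙ : Measure Ω) [IsProbabilityMeasure ℙ]
    (d m : ℕ)
    (N : ℕ → Ω → Fin m → ℝ) (hN : ∀ s, Measurable (N s))
    (L : ℝ)
    (a : EuclideanSpace ℝ (Fin d) → (Fin m → ℝ) → EuclideanSpace ℝ (Fin d))
    (hameas : Measurable fun p : EuclideanSpace ℝ (Fin d) × (Fin m → ℝ) => a p.1 p.2)
    (haC1 : ∀ n, ContDiff ℝ 1 (fun x => a x n))
    (hDmeas : Measurable fun p : EuclideanSpace ℝ (Fin d) × (Fin m → ℝ) =>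
      fderiv ℝ (fun x => a x p.2) p.1)
    (hL : ∀ x n, ‖fderiv ℝ (fun y => a y n) x‖ ≤ L)
    (c : EuclideanSpace ℝ (Fin d) → ℝ) (hc : ContDiff ℝ 1 c)
    (B : ℝ) (hcB : ∀ y, |c y| ≤ B)
    (C : ℝ) (hcC : ∀ y, ‖gradient c y‖ ≤ C)
    (α : ℝ) (hα : α ∈ Set.Ioo (0 : ℝ) 1) (hαL : α * L < 1) :
    (∀ x, Summable (fun t : ℕ => |α ^ t * ∫ ω, c (rflow a N t x ω) ∂ℙ|)) ∧
    Differentiable ℝ (fun x => ∑' t : ℕ, α ^ t * ∫ ω, c (rflow a N t x ω) ∂ℙ) ∧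
    (∀ x, gradient (fun x => ∑' t : ℕ, α ^ t * ∫ ω, c (rflow a N t x ω) ∂ℙ) x
      = ∑' t : ℕ, α ^ t • ∫ ω, ContinuousLinearMap.adjoint
          (fderiv ℝ (fun y => rflow a N t y ω) x) (gradient c (rflow a N t x ω)) ∂ℙ) ∧
    ∀ x, ‖gradient (fun x => ∑' t : ℕ, α ^ t * ∫ ω, c (rflow a N t x ω) ∂ℙ) x‖
      ≤ C / (1 - α * L) := by
  obtain ⟨hα₀, hα₁⟩ := hα
  have ha (n : Fin m → ℝ) : Differentiable ℝ (a · n) := (haC1 n).differentiable one_ne_zero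
  have hc_diff : Differentiable ℝ c := hc.differentiable one_ne_zero
  have hc_fderiv_le (y : EuclideanSpace ℝ (Fin d)) : ‖fderiv ℝ c y‖ ≤ C := by
    simpa [gradient] using hcC y
  have hαL₀ : 0 ≤ α * L := mul_nonneg hα₀.le ((norm_nonneg _).trans (hL 0 0))
  have hV_le (t : ℕ) (x) : |∫ ω, c (rflow a N t x ω) ∂ℙ| ≤ B := by
    simpa using norm_integral_le_of_norm_le_const (μ := ℙ) (C := B)
      (f := fun ω => c (rflow a N t x ω)) (.of_forall fun ω => hcB _)
  have hD_le (t : ℕ) (x) : ‖∫ ω, fderiv ℝ (fun y => c (rflow a N t y ω)) x ∂ℙ‖ ≤ C * L ^ t := by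
    simpa using norm_integral_le_of_norm_le_const (μ := ℙ)
      (.of_forall (rflow.norm_fderiv_comp_le ha hL hc_diff hc_fderiv_le t x))
  have hsum (x) := summable_abs_pow_mul_of_abs_le hα₀.le hα₁ (hV_le · x)
  have hderiv := hasFDerivAt_tsum_pow_mul hα₀.le hαL₀ hαL
    (rflow.hasFDerivAt_integral_comp hameas hN ha hDmeas hL hc hcB hc_fderiv_le) hD_le
    (hsum 0).of_abs
  have hgrad (x) : gradient (fun x => ∑' t : ℕ, α ^ t * ∫ ω, c (rflow a N t x ω) ∂ℙ) x
      = ∑' t : ℕ, α ^ t • ∫ ω, ContinuousLinearMap.adjoint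
          (fderiv ℝ (fun y => rflow a N t y ω) x) (gradient c (rflow a N t x ω)) ∂ℙ := by
    rw [gradient, (hderiv x).fderiv, toDual_symm_tsum_smul_integral _ fun t =>
      .of_bound (rflow.measurable_fderiv_comp hameas hN ha hDmeas hc t x).aestronglyMeasurable
        _ (.of_forall (rflow.norm_fderiv_comp_le ha hL hc_diff hc_fderiv_le t x))]
    exact tsum_congr fun t => congrArg _ (integral_congr_ae (.of_forall fun ω =>
      gradient_comp (hc_diff _) (rflow.differentiable ha t ω x)))
  refine ⟨hsum, fun x => (hderiv x).differentiableAt, hgrad, fun x => ?_⟩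
  rw [gradient, LinearIsometryEquiv.norm_map, (hderiv x).fderiv]
  exact norm_tsum_pow_smul_le hα₀.le hαL₀ hαL (hD_le · x)
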